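/- arXiv:0803.1852 — 5 statements merged into one kernel-verified Lean document; each statement's English description precedes it below -/
import Mathlib

section
/- Let A be a p(t)-homogeneous bounded operator with respect to a family of unitary operators {U_t}. If z belongs to the point spectrum of A, then z·p(t)^n belongs to the point spectrum of A for every n ∈ ℤ and t ∈ 𝔗. -/
/-!
If `U A = c • A U` with `U` invertible, then `U⁻¹` maps a `z`-eigenvector of `A` to a
`c z`-eigenvector, and, when `c ≠ 0`, `U` maps it to a `c⁻¹ z`-eigenvector; induction on `n ∈ ℤ`
gives the eigenvalue `z cⁿ`. If `c = 0` then `A = 0`, so `z = 0 = z cⁿ`.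
-/

namespace Module.End

variable {K E : Type*} [Field K] [AddCommGroup E] [Module K E]
  {A : End K E} {U : E ≃ₗ[K] E} {c z : K}

theorem HasEigenvector.linearEquiv_symm_apply (hUA : ∀ x, U (A x) = c • A (U x)) {v : E}
    (hv : A.HasEigenvector z v) : A.HasEigenvector (c * z) (U.symm v) := by
  refine ⟨mem_eigenspace_iff.2 <| U.injective ?_, by simpa using hv.2⟩
  rw [hUA, U.apply_symm_apply, hv.apply_eq_smul, map_smul, U.apply_symm_apply, smul_smul]

theorem HasEigenvector.linearEquiv_apply (hUA : ∀ x, U (A x) = c • A (U x)) (hc : c ≠ 0)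
    {v : E} (hv : A.HasEigenvector z v) : A.HasEigenvector (c⁻¹ * z) (U v) := by
  refine ⟨mem_eigenspace_iff.2 ?_, by simpa using hv.2⟩
  rw [← inv_smul_smul₀ hc (A (U v)), ← hUA, hv.apply_eq_smul, map_smul, smul_smul]

theorem HasEigenvalue.mul_left_of_apply_comm (hUA : ∀ x, U (A x) = c • A (U x))
    (hz : A.HasEigenvalue z) : A.HasEigenvalue (c * z) :=
  have ⟨_, hv⟩ := hz.exists_hasEigenvector
  hasEigenvalue_of_hasEigenvector (hv.linearEquiv_symm_apply hUA)

theorem HasEigenvalue.inv_mul_left_of_apply_comm (hUA : ∀ x, U (A x) = c • A (U x))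
    (hc : c ≠ 0) (hz : A.HasEigenvalue z) : A.HasEigenvalue (c⁻¹ * z) :=
  have ⟨_, hv⟩ := hz.exists_hasEigenvector
  hasEigenvalue_of_hasEigenvector (hv.linearEquiv_apply hUA hc)

theorem HasEigenvalue.eq_zero_of_apply_comm_zero (hUA : ∀ x, U (A x) = (0 : K) • A (U x))
    (hz : A.HasEigenvalue z) : z = 0 := by
  obtain ⟨v, hv⟩ := hz.exists_hasEigenvector
  have hAv : A v = 0 := U.map_eq_zero_iff.1 (by rw [hUA, zero_smul])
  rw [hv.apply_eq_smul] at hAv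
  exact (smul_eq_zero.1 hAv).resolve_right hv.2

theorem HasEigenvalue.mul_zpow_of_apply_comm (hUA : ∀ x, U (A x) = c • A (U x))
    (hz : A.HasEigenvalue z) (n : ℤ) : A.HasEigenvalue (z * c ^ n) := by
  rcases eq_or_ne c 0 with rfl | hc
  · obtain rfl := hz.eq_zero_of_apply_comm_zero hUA
    rwa [zero_mul]
  induction n using Int.induction_on with
  | zero => simpa using hz
  | succ k ih =>
    convert ih.mul_left_of_apply_comm hUA using 1
    rw [zpow_add_one₀ hc]
    ring
  | pred k ih =>
    convert ih.inv_mul_left_of_apply_comm hUA hc using 1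
    rw [zpow_sub_one₀ hc]
    ring

end Module.End

theorem pt_homogeneous_point_spectrum_general
    {H : Type*} [NormedAddCommGroup H] [InnerProductSpace ℂ H]
    {T : Type*} (U : T → (H ≃ₗᵢ[ℂ] H)) (p : T → ℝ)
    (A : H →L[ℂ] H)
    (hhom : ∀ (t : T) (x : H), U t (A x) = (p t : ℂ) • A (U t x)) :
    ∀ z : ℂ, (∃ v : H, v ≠ 0 ∧ A v = z • v) →
      ∀ (n : ℤ) (t : T), ∃ v : H, v ≠ 0 ∧ A v = (z * (p t : ℂ) ^ n) • v := by
  rintro z ⟨v, hv, hAv⟩ n t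
  have hz : Module.End.HasEigenvalue (A : Module.End ℂ H) z :=
    Module.End.hasEigenvalue_of_hasEigenvector ⟨Module.End.mem_eigenspace_iff.2 hAv, hv⟩
  obtain ⟨w, hw⟩ :=
    (hz.mul_zpow_of_apply_comm (U := (U t).toLinearEquiv) (hhom t) n).exists_hasEigenvector
  exact ⟨w, hw.2, hw.apply_eq_smul⟩

/-- for a bounded `p(t)`-homogeneous operator `A`, the point
spectrum is invariant under multiplication by `p(t)^n`, `n ∈ ℤ`. -/
theorem pt_homogeneous_point_spectrum
    {H : Type*} [NormedAddCommGroup H] [InnerProductSpace ℂ H] [CompleteSpace H]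
    {T : Type*} (U : T → (H ≃ₗᵢ[ℂ] H)) (g : T → T) (p : T → ℝ)
    (hadj : ∀ (t : T) (x y : H), (inner ℂ (U t x) y : ℂ) = inner ℂ x (U (g t) y))
    (A : H →L[ℂ] H)
    (hhom : ∀ (t : T) (x : H), U t (A x) = (p t : ℂ) • A (U t x)) :
    ∀ z : ℂ, (∃ v : H, v ≠ 0 ∧ A v = z • v) →
      ∀ (n : ℤ) (t : T), ∃ v : H, v ≠ 0 ∧ A v = (z * (p t : ℂ) ^ n) • v :=
  pt_homogeneous_point_spectrum_general U p A hhom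
end

section
/- Let A be a densely defined symmetric operator with finite defect numbers that is p(t)-homogeneous with respect to a family of unitary operators {U_t}, and suppose p(t₀) ≠ 1 for some t₀ ∈ 𝔗. Then every p(t)-homogeneous self-adjoint extension of A is nonnegative. -/
/-!
If `p t₀ ≤ 0`, homogeneity forces the nonnegative form `⟪u, A u⟫` to vanish, so `A = 0` on its
dense domain, and then every self-adjoint extension of `A` is `0` as well. If `p t₀ > 0`,
conjugation by `U t₀` or by its inverse multiplies `Re ⟪x, B x⟫` by some `r > 1` without changing
`‖x‖`, so one vector with a negative value would make the form unbounded below on a sphere.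
But it is bounded below by `-M ‖x‖²`: the real form `Re ⟪x, (B + 1) y⟫` is nonnegative on the
vectors `v` with `(B + 1) v ⊥ ran(A + 1)ᗮ` (a limit argument using that `A` is nonnegative and `B`
is closed), so its negative orthonormal families are no larger than the finite-dimensional defect
space, and a maximal one yields the bound.
-/

open InnerProductSpace

/-- `p(t)`-homogeneity for unbounded operators (equality `U t A = p t • A U t`
including domains). -/
def IsPtHomogeneous {H : Type*} [NormedAddCommGroup H] [InnerProductSpace ℂ H]
    {T : Type*} (U : T → (H ≃ₗᵢ[ℂ] H)) (p : T → ℝ) (A : H →ₗ.[ℂ] H) : Prop :=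
  ∀ t : T, (∀ x : H, x ∈ A.domain ↔ U t x ∈ A.domain) ∧
    ∀ (x : H) (hx : x ∈ A.domain) (hx' : U t x ∈ A.domain),
      U t (A ⟨x, hx⟩) = (p t : ℂ) • A ⟨U t x, hx'⟩

open Filter Topology Finset

lemma nonneg_of_mem_of_bddBelow_of_mul_mem {S : Set ℝ} (hS : BddBelow S) {r : ℝ}
    (hr : 1 < r) (hmul : ∀ a ∈ S, r * a ∈ S) {a : ℝ} (ha : a ∈ S) : 0 ≤ a := by
  by_contra! ha0
  obtain ⟨m, hm⟩ := hS
  have hpow : ∀ n : ℕ, r ^ n * a ∈ S := fun n => by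
    induction n with
    | zero => simpa using ha
    | succ n ih => simpa [pow_succ', mul_assoc] using hmul _ ih
  obtain ⟨n, hn⟩ := pow_unbounded_of_one_lt (m / a) hr
  have := hm (hpow n)
  rw [div_lt_iff_of_neg ha0] at hn
  linarith

namespace LinearMap.BilinForm

variable {V W : Type*} [AddCommGroup V] [Module ℝ V] [AddCommGroup W] [Module ℝ W]

def IsNegOrthonormal {ι : Type*} [DecidableEq ι] (s : LinearMap.BilinForm ℝ V) (b : ι → V) :
    Prop :=
  ∀ i j, s (b i) (b j) = if i = j then -1 else 0

section

variable {ι : Type*} [Fintype ι] [DecidableEq ι] {s : LinearMap.BilinForm ℝ V} {b : ι → V}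

lemma IsNegOrthonormal.apply_sum_smul (hb : s.IsNegOrthonormal b) (g : ι → ℝ) (j : ι) :
    s (b j) (∑ i, g i • b i) = -g j := by
  simp [map_sum, hb j]

lemma IsNegOrthonormal.apply_sum_smul_sum_smul (hb : s.IsNegOrthonormal b) (g : ι → ℝ) :
    s (∑ i, g i • b i) (∑ i, g i • b i) = -∑ i, g i ^ 2 := by
  simp only [sum_left, smul_left, hb.apply_sum_smul, ← sum_neg_distrib, mul_neg, sq]

lemma IsNegOrthonormal.card_le_finrank [FiniteDimensional ℝ W] (hb : s.IsNegOrthonormal b)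
    (φ : V →ₗ[ℝ] W) (hker : ∀ v, φ v = 0 → 0 ≤ s v v) :
    Fintype.card ι ≤ Module.finrank ℝ W := by
  refine LinearIndependent.fintype_card_le_finrank (b := φ ∘ b)
    (Fintype.linearIndependent_iff.2 fun g hg i => ?_)
  have hφ : φ (∑ i, g i • b i) = 0 := by simpa using hg
  have hsq : ∑ i, g i ^ 2 = 0 := le_antisymm (by
    linarith [hker _ hφ, hb.apply_sum_smul_sum_smul g]) (by positivity)
  exact pow_eq_zero_iff two_ne_zero |>.1 <|
    (sum_eq_zero_iff_of_nonneg fun j _ => sq_nonneg (g j)).1 hsq i (mem_univ i)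

end

section

variable {s : LinearMap.BilinForm ℝ V} {n : ℕ} {b : Fin n → V}

lemma IsNegOrthonormal.snoc (hs : IsSymm s) (hb : s.IsNegOrthonormal b) {y : V}
    (hy : ∀ j, s (b j) y = 0) (hyy : s y y = -1) :
    s.IsNegOrthonormal (Fin.snoc b y : Fin (n + 1) → V) := by
  intro i j
  induction i using Fin.lastCases <;> induction j using Fin.lastCases <;>
    simp [hyy, hy, hs.eq y, hb _ _, Fin.castSucc_ne_last, (Fin.castSucc_ne_last _).symm]

lemma IsNegOrthonormal.apply_self_nonneg_of_forall_not (hs : IsSymm s)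
    (hb : s.IsNegOrthonormal b) (hmax : ∀ b' : Fin (n + 1) → V, ¬ s.IsNegOrthonormal b')
    {y : V} (hy : ∀ j, s (b j) y = 0) : 0 ≤ s y y := by
  by_contra! hneg
  set c := Real.sqrt (-s y y)
  have hc : c ^ 2 = -s y y := Real.sq_sqrt (by linarith)
  have hc0 : c ≠ 0 := (Real.sqrt_pos.2 (by linarith)).ne'
  refine hmax _ (hb.snoc hs (y := c⁻¹ • y) (fun j => by simp [hy j]) ?_)
  rw [smul_left, map_smul, smul_eq_mul, show s y y = -c ^ 2 by linarith]
  field_simp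

end

/- Take a maximal negative orthonormal family `b` (their sizes are bounded by `finrank W`): then
`x + ∑ i, s (b i) x • b i` is `s`-orthogonal to `b`, so its `s`-value is nonnegative. -/
theorem exists_forall_neg_sum_sq_le [FiniteDimensional ℝ W] {s : LinearMap.BilinForm ℝ V}
    (hs : IsSymm s) (φ : V →ₗ[ℝ] W) (hker : ∀ v, φ v = 0 → 0 ≤ s v v) :
    ∃ (n : ℕ) (b : Fin n → V), ∀ x, -∑ i, s (b i) x ^ 2 ≤ s x x := by
  classical
  let P (n : ℕ) := ∃ b : Fin n → V, s.IsNegOrthonormal b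
  have hle : ∀ n, P n → n ≤ Module.finrank ℝ W := fun n ⟨b, hb⟩ => by
    simpa using hb.card_le_finrank φ hker
  set N := Nat.findGreatest P (Module.finrank ℝ W)
  obtain ⟨b, hb⟩ : P N := Nat.findGreatest_spec (Nat.zero_le _) ⟨Fin.elim0, fun i => i.elim0⟩
  have hmax : ¬ P (N + 1) := fun hP =>
    Nat.findGreatest_is_greatest (Nat.lt_succ_self N) (hle _ hP) hP
  refine ⟨N, b, fun x => ?_⟩
  set v := ∑ i, s (b i) x • b i
  have hy : ∀ j, s (b j) (x + v) = 0 := fun j => by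
    rw [map_add, hb.apply_sum_smul, add_neg_cancel]
  have hvy : s v (x + v) = 0 := by simp [v, hy]
  have hyy := hb.apply_self_nonneg_of_forall_not hs (fun b' hb' => hmax ⟨b', hb'⟩) hy
  have hvv := hb.apply_sum_smul_sum_smul (fun i => s (b i) x)
  calc -∑ i, s (b i) x ^ 2 ≤ s (x + v) (x + v) + s v v := by linarith
    _ = s x x := by
      simp only [map_add, LinearMap.add_apply, hs.eq v (x + v)] at hvy ⊢
      linarith [hs.eq x v]

end LinearMap.BilinForm

lemma inner_apply_eq_zero_of_forall_inner_apply_self {H V : Type*} [NormedAddCommGroup H]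
    [InnerProductSpace ℂ H] [AddCommGroup V] [Module ℂ V] (f g : V →ₗ[ℂ] H)
    (h : ∀ v, ⟪f v, g v⟫_ℂ = 0) (v w : V) : ⟪f v, g w⟫_ℂ = 0 := by
  have h₁ := h (v + w)
  have h₂ := h (v + Complex.I • w)
  simp only [map_add, map_smul, inner_add_left, inner_add_right, inner_smul_left,
    inner_smul_right, Complex.conj_I, h v, h w] at h₁ h₂
  linear_combination (h₁ - Complex.I * h₂ + (⟪f v, g w⟫_ℂ - ⟪f w, g v⟫_ℂ) * Complex.I_sq) / 2

namespace LinearPMap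

variable {H : Type*} [NormedAddCommGroup H] [InnerProductSpace ℂ H] {A B : H →ₗ.[ℂ] H}

lemma sq_norm_le_re_inner_apply_add_self {u : A.domain} (hu : 0 ≤ (⟪(u : H), A u⟫_ℂ).re) :
    ‖(u : H)‖ ^ 2 ≤ (⟪(u : H), A u + u⟫_ℂ).re := by
  have h : (⟪(u : H), (u : H)⟫_ℂ).re = ‖(u : H)‖ ^ 2 := inner_self_eq_norm_sq (𝕜 := ℂ) _
  rw [inner_add_right, Complex.add_re]
  linarith

lemma norm_le_norm_apply_add_self {u : A.domain} (hu : 0 ≤ (⟪(u : H), A u⟫_ℂ).re) :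
    ‖(u : H)‖ ≤ ‖A u + u‖ := by
  have h : ‖(u : H)‖ ^ 2 ≤ ‖(u : H)‖ * ‖A u + u‖ :=
    (sq_norm_le_re_inner_apply_add_self hu).trans (re_inner_le_norm (𝕜 := ℂ) _ _)
  rcases (norm_nonneg (u : H)).eq_or_lt with h0 | h0
  · exact h0 ▸ norm_nonneg _
  · nlinarith

lemma apply_eq_zero_of_re_inner_apply_self_eq_zero (hdense : Dense (A.domain : Set H))
    (hsym : ∀ x y : A.domain, ⟪A x, (y : H)⟫_ℂ = ⟪(x : H), A y⟫_ℂ)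
    (hA : ∀ u : A.domain, (⟪(u : H), A u⟫_ℂ).re = 0) (u : A.domain) : A u = 0 := by
  have hq : ∀ w : A.domain, ⟪(w : H), A w⟫_ℂ = 0 := fun w =>
    Complex.ext (hA w) (Complex.conj_eq_iff_im.1 (by rw [inner_conj_symm, hsym]))
  refine hdense.eq_zero_of_inner_right ℂ fun w hw => ?_
  exact inner_apply_eq_zero_of_forall_inner_apply_self A.domain.subtype A.toFun hq ⟨w, hw⟩ u

variable (B) in
noncomputable def reInnerAddSelfForm : LinearMap.BilinForm ℝ B.domain :=
  LinearMap.mk₂ ℝ (fun x y => (⟪(x : H), B y + y⟫_ℂ).re)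
    (fun x x' y => by simp; ring)
    (fun c x y => by simp [Complex.real_smul]; ring)
    (fun x y y' => by simp [LinearPMap.map_add]; ring)
    (fun c x y => by
      rw [show c • y = (c : ℂ) • y from rfl, LinearPMap.map_smul]
      simp; ring)

@[simp]
lemma reInnerAddSelfForm_apply (x y : B.domain) :
    B.reInnerAddSelfForm x y = (⟪(x : H), B y + y⟫_ℂ).re := rfl

variable [CompleteSpace H]

lemma inner_apply_eq_of_adjoint_eq (hB : B.adjoint = B) (x y : B.domain) :
    ⟪B x, (y : H)⟫_ℂ = ⟪(x : H), B y⟫_ℂ := by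
  have h := adjoint_isFormalAdjoint (IsSelfAdjoint.dense_domain (isSelfAdjoint_def.2 hB))
  rw [hB] at h
  exact h x y

lemma apply_eq_zero_of_le_of_adjoint_eq (hdense : Dense (A.domain : Set H))
    (hAB : A ≤ B) (hB : B.adjoint = B) (hA : ∀ u : A.domain, A u = 0) (x : B.domain) :
    B x = 0 := by
  refine hdense.eq_zero_of_inner_right ℂ fun u hu => ?_
  have h := inner_apply_eq_of_adjoint_eq hB ⟨u, hAB.1 hu⟩ x
  rwa [← hAB.2 (x := ⟨u, hu⟩) (y := ⟨u, hAB.1 hu⟩) rfl, hA, inner_zero_left, eq_comm] at h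

/- Since `‖u‖ ≤ ‖(A + 1) u‖`, approximants `(A + 1) uₙ → (B + 1) v` have `uₙ` Cauchy; the limit `l`
lies in `dom B` as `B` is closed, and `0 ≤ Re ⟪uₙ, (A + 1) uₙ⟫` passes to
`Re ⟪l, (B + 1) v⟫ = Re ⟪(B + 1) l, v⟫ = Re ⟪(B + 1) v, v⟫`. -/
theorem re_inner_apply_add_self_nonneg_of_mem_closure (hAB : A ≤ B)
    (hB : B.adjoint = B) (hA : ∀ u : A.domain, 0 ≤ (⟪(u : H), A u⟫_ℂ).re) {v : B.domain}
    (hv : B v + v ∈ (LinearMap.range (A.toFun + A.domain.subtype)).topologicalClosure) :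
    0 ≤ (⟪(v : H), B v + v⟫_ℂ).re := by
  set z := B v + v
  obtain ⟨w, hw, hwz⟩ := mem_closure_iff_seq_limit.1
    (show z ∈ _root_.closure (LinearMap.range (A.toFun + A.domain.subtype) : Set H) by
      rw [← Submodule.topologicalClosure_coe]; exact hv)
  choose u hu using hw
  replace hu : ∀ n, A (u n) + u n = w n := hu
  have hdist : ∀ m n, dist (u m : H) (u n) ≤ dist (w m) (w n) := fun m n => by
    have h := norm_le_norm_apply_add_self (hA (u m - u n))
    rw [LinearPMap.map_sub, Submodule.coe_sub, sub_add_sub_comm] at h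
    rwa [dist_eq_norm, dist_eq_norm, ← hu, ← hu]
  obtain ⟨l, hul⟩ : ∃ l, Tendsto (fun n => (u n : H)) atTop (𝓝 l) := by
    refine cauchySeq_tendsto_of_complete (cauchySeq_iff_le_tendsto_0.2 ?_)
    obtain ⟨b, hb0, hb, hbt⟩ := cauchySeq_iff_le_tendsto_0.1 hwz.cauchySeq
    exact ⟨b, hb0, fun m n N hm hn => (hdist m n).trans (hb m n N hm hn), hbt⟩
  obtain ⟨y, hyl, hBy⟩ : ∃ y : B.domain, (y : H) = l ∧ B y = z - l := by
    have hgraph : ∀ n, ((u n : H), w n - u n) ∈ B.graph := fun n => by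
      rw [← hu, add_sub_cancel_right]
      exact le_graph_of_le hAB (A.mem_graph (u n))
    simpa using (IsSelfAdjoint.isClosed (isSelfAdjoint_def.2 hB)).mem_of_tendsto
      (hul.prodMk_nhds (hwz.sub hul)) (Eventually.of_forall hgraph)
  have hlz : 0 ≤ (⟪l, z⟫_ℂ).re := by
    refine ge_of_tendsto' ((Complex.continuous_re.tendsto _).comp (hul.inner hwz)) fun n => ?_
    rw [Function.comp_apply, ← hu]
    exact (sq_nonneg _).trans (sq_norm_le_re_inner_apply_add_self (hA (u n)))
  have hzv : ⟪l, z⟫_ℂ = ⟪z, (v : H)⟫_ℂ := by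
    rw [← hyl, inner_add_right, ← inner_apply_eq_of_adjoint_eq hB, ← inner_add_left, hBy, hyl,
      sub_add_cancel]
  rwa [hzv, ← inner_conj_symm, Complex.conj_re] at hlz

lemma isSymm_reInnerAddSelfForm (hB : B.adjoint = B) :
    B.reInnerAddSelfForm.IsSymm := by
  refine ⟨fun x y => ?_⟩
  simp only [reInnerAddSelfForm_apply, inner_add_right, Complex.add_re]
  rw [← inner_apply_eq_of_adjoint_eq hB]
  congr 1 <;> rw [← inner_conj_symm, Complex.conj_re]

theorem exists_neg_mul_sq_norm_le_re_inner_apply (hAB : A ≤ B)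
    (hB : B.adjoint = B) (hA : ∀ u : A.domain, 0 ≤ (⟪(u : H), A u⟫_ℂ).re)
    (hdef : FiniteDimensional ℂ ((LinearMap.range (A.toFun + A.domain.subtype))ᗮ)) :
    ∃ M : ℝ, ∀ x : B.domain, -(M * ‖(x : H)‖ ^ 2) ≤ (⟪(x : H), B x⟫_ℂ).re := by
  set D := (LinearMap.range (A.toFun + A.domain.subtype))ᗮ
  let φ : B.domain →ₗ[ℝ] D :=
    (D.orthogonalProjectionOnto ∘ₗ (B.toFun + B.domain.subtype)).restrictScalars ℝ
  have hker : ∀ v, φ v = 0 → 0 ≤ B.reInnerAddSelfForm v v := fun v hv => by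
    rw [reInnerAddSelfForm_apply]
    refine re_inner_apply_add_self_nonneg_of_mem_closure hAB hB hA ?_
    rw [← Submodule.orthogonal_orthogonal_eq_closure]
    exact Submodule.orthogonalProjectionOnto_eq_zero_iff.1 hv
  obtain ⟨n, b, hb⟩ := LinearMap.BilinForm.exists_forall_neg_sum_sq_le
    (isSymm_reInnerAddSelfForm hB) φ hker
  refine ⟨∑ i, ‖B (b i) + b i‖ ^ 2 + 1, fun x => ?_⟩
  have hbx : ∀ i, B.reInnerAddSelfForm (b i) x ^ 2 ≤ ‖B (b i) + b i‖ ^ 2 * ‖(x : H)‖ ^ 2 := by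
    intro i
    rw [(isSymm_reInnerAddSelfForm hB).eq, reInnerAddSelfForm_apply, ← mul_pow, mul_comm]
    exact sq_le_sq.2 ((Complex.abs_re_le_norm _).trans
      ((norm_inner_le_norm (𝕜 := ℂ) _ _).trans (le_abs_self _)))
  have hxx : B.reInnerAddSelfForm x x = (⟪(x : H), B x⟫_ℂ).re + ‖(x : H)‖ ^ 2 := by
    rw [reInnerAddSelfForm_apply, inner_add_right, Complex.add_re]
    exact congrArg _ (inner_self_eq_norm_sq (𝕜 := ℂ) _)
  have := Finset.sum_le_sum fun i (_ : i ∈ Finset.univ) => hbx i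
  rw [← Finset.sum_mul] at this
  linarith [hb x]

end LinearPMap

namespace IsPtHomogeneous

variable {H : Type*} [NormedAddCommGroup H] [InnerProductSpace ℂ H] {T : Type*}
  {U : T → (H ≃ₗᵢ[ℂ] H)} {p : T → ℝ} {A : H →ₗ.[ℂ] H}

lemma apply_mem (h : IsPtHomogeneous U p A) (t : T) (x : A.domain) : U t x ∈ A.domain :=
  ((h t).1 x).1 x.2

lemma symm_apply_mem (h : IsPtHomogeneous U p A) (t : T) (x : A.domain) :
    (U t).symm x ∈ A.domain :=
  ((h t).1 _).2 (by simp)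

lemma inner_symm_apply (h : IsPtHomogeneous U p A) (t : T) (x : A.domain) :
    ⟪(U t).symm x, A ⟨_, h.symm_apply_mem t x⟩⟫_ℂ = p t * ⟪(x : H), A x⟫_ℂ := by
  have hx := (h t).2 _ (h.symm_apply_mem t x) (by simp)
  simp only [LinearIsometryEquiv.apply_symm_apply] at hx
  rw [← (U t).inner_map_map, LinearIsometryEquiv.apply_symm_apply, hx, inner_smul_right]

lemma inner_apply_apply (h : IsPtHomogeneous U p A) (t : T) (hpt : p t ≠ 0) (x : A.domain) :
    ⟪U t x, A ⟨_, h.apply_mem t x⟩⟫_ℂ = (p t)⁻¹ * ⟪(x : H), A x⟫_ℂ := by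
  have hx := h.inner_symm_apply t ⟨_, h.apply_mem t x⟩
  simp only [LinearIsometryEquiv.symm_apply_apply] at hx
  rw [hx, ← mul_assoc, ← Complex.ofReal_mul, inv_mul_cancel₀ hpt,
    Complex.ofReal_one, one_mul]

lemma apply_eq_zero_of_nonpos (h : IsPtHomogeneous U p A) (hdense : Dense (A.domain : Set H))
    (hsym : ∀ x y : A.domain, ⟪A x, (y : H)⟫_ℂ = ⟪(x : H), A y⟫_ℂ)
    (hA : ∀ u : A.domain, 0 ≤ (⟪(u : H), A u⟫_ℂ).re) {t : T} (hpt : p t ≤ 0) (u : A.domain) :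
    A u = 0 := by
  rcases hpt.lt_or_eq with hneg | hzero
  · refine LinearPMap.apply_eq_zero_of_re_inner_apply_self_eq_zero hdense hsym (fun w => ?_) u
    have hUw := hA ⟨_, h.apply_mem t w⟩
    rw [h.inner_apply_apply t hneg.ne, Complex.re_ofReal_mul] at hUw
    nlinarith [hA w, inv_lt_zero.2 hneg]
  · have hu := (h t).2 u u.2 (h.apply_mem t u)
    rwa [hzero, Complex.ofReal_zero, zero_smul, LinearIsometryEquiv.map_eq_zero_iff] at hu

lemma exists_one_lt_forall_exists_re_inner_apply_eq_mul (h : IsPtHomogeneous U p A) {t : T}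
    (hpos : 0 < p t) (hp1 : p t ≠ 1) :
    ∃ r, 1 < r ∧ ∀ x : A.domain, ∃ y : A.domain,
      ‖(y : H)‖ = ‖(x : H)‖ ∧ (⟪(y : H), A y⟫_ℂ).re = r * (⟪(x : H), A x⟫_ℂ).re := by
  rcases hp1.lt_or_gt with hlt | hgt
  · refine ⟨(p t)⁻¹, (one_lt_inv₀ hpos).2 hlt, fun x => ⟨⟨_, h.apply_mem t x⟩, ?_, ?_⟩⟩
    · exact (U t).norm_map _
    · rw [h.inner_apply_apply t hpos.ne', Complex.re_ofReal_mul]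
  · refine ⟨p t, hgt, fun x => ⟨⟨_, h.symm_apply_mem t x⟩, ?_, ?_⟩⟩
    · exact (U t).symm.norm_map _
    · rw [h.inner_symm_apply, Complex.re_ofReal_mul]

end IsPtHomogeneous

theorem pt_homogeneous_selfadjoint_extension_nonneg_general
    {H : Type*} [NormedAddCommGroup H] [InnerProductSpace ℂ H] [CompleteSpace H]
    {T : Type*} (U : T → (H ≃ₗᵢ[ℂ] H)) (p : T → ℝ)
    (A : H →ₗ.[ℂ] H) (hdense : Dense (A.domain : Set H))
    (hsym : ∀ x y : A.domain, (inner ℂ (A x) (y : H) : ℂ) = inner ℂ (x : H) (A y))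
    (hnonneg : ∀ x : A.domain, 0 ≤ (inner ℂ (x : H) (A x) : ℂ).re)
    (hdefect : FiniteDimensional ℂ
      ((LinearMap.range (A.toFun + A.domain.subtype))ᗮ : Submodule ℂ H))
    (hhom : IsPtHomogeneous U p A)
    (t₀ : T) (hp : p t₀ ≠ 1) :
    ∀ B : H →ₗ.[ℂ] H, A ≤ B → B.adjoint = B → IsPtHomogeneous U p B →
      ∀ x : B.domain, 0 ≤ (inner ℂ (x : H) (B x) : ℂ).re := by
  intro B hAB hB hhomB x
  rcases le_or_gt (p t₀) 0 with hle | hpos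
  · have hA0 := hhom.apply_eq_zero_of_nonpos hdense hsym hnonneg hle
    rw [LinearPMap.apply_eq_zero_of_le_of_adjoint_eq hdense hAB hB hA0 x, inner_zero_right,
      Complex.zero_re]
  · obtain ⟨M, hM⟩ := LinearPMap.exists_neg_mul_sq_norm_le_re_inner_apply hAB hB hnonneg hdefect
    obtain ⟨r, hr, hscale⟩ := hhomB.exists_one_lt_forall_exists_re_inner_apply_eq_mul hpos hp
    refine nonneg_of_mem_of_bddBelow_of_mul_mem (S := {a | ∃ y : B.domain,
      ‖(y : H)‖ = ‖(x : H)‖ ∧ (inner ℂ (y : H) (B y) : ℂ).re = a}) ?_ hr ?_ ⟨x, rfl, rfl⟩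
    · exact ⟨-(M * ‖(x : H)‖ ^ 2), by rintro _ ⟨y, hy, rfl⟩; exact hy ▸ hM y⟩
    · rintro _ ⟨y, hy, rfl⟩
      obtain ⟨y', hy', hy'y⟩ := hscale y
      exact ⟨y', hy'.trans hy, hy'y⟩

/-- if a densely defined nonnegative symmetric operator `A` with
finite defect numbers is `p(t)`-homogeneous and `p t₀ ≠ 1` for some `t₀`, then
every `p(t)`-homogeneous self-adjoint extension of `A` is nonnegative. -/
theorem pt_homogeneous_selfadjoint_extension_nonneg
    {H : Type*} [NormedAddCommGroup H] [InnerProductSpace ℂ H] [CompleteSpace H]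
    {T : Type*} (U : T → (H ≃ₗᵢ[ℂ] H)) (g : T → T) (p : T → ℝ)
    (hadj : ∀ (t : T) (x y : H), (inner ℂ (U t x) y : ℂ) = inner ℂ x (U (g t) y))
    (A : H →ₗ.[ℂ] H) (hdense : Dense (A.domain : Set H))
    (hsym : ∀ x y : A.domain, (inner ℂ (A x) (y : H) : ℂ) = inner ℂ (x : H) (A y))
    (hnonneg : ∀ x : A.domain, 0 ≤ (inner ℂ (x : H) (A x) : ℂ).re)
    (hdefect : FiniteDimensional ℂ
      ((LinearMap.range (A.toFun + A.domain.subtype))ᗮ : Submodule ℂ H))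
    (hhom : IsPtHomogeneous U p A)
    (t₀ : T) (hp : p t₀ ≠ 1) :
    ∀ B : H →ₗ.[ℂ] H, A ≤ B → B.adjoint = B → IsPtHomogeneous U p B →
      ∀ x : B.domain, 0 ≤ (inner ℂ (x : H) (B x) : ℂ).re :=
  pt_homogeneous_selfadjoint_extension_nonneg_general U p A hdense hsym hnonneg hdefect hhom t₀ hp
end

section
/- Let A be a densely defined nonnegative symmetric operator that is p(t)-homogeneous with respect to a family of unitary operators {U_t} closed under adjoints. Then the Friedrichs extension A_F of A is also p(t)-homogeneous with respect to {U_t}. -/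
open InnerProductSpace

/-!
Let `K` be the completion of `D(A)` for the form inner product `⟪x, y⟫ + ⟪A x, y⟫`, let
`ι : K → H` be the contractive extension of the inclusion and `j = ι†`. For `(f, f') ∈ A*` the
Friedrichs functional splits as
`‖f - h‖² + re ⟪f' - A h, f - h⟫ = D(f, f') + ‖h - j (f + f')‖²_K`,
so by density of `D(A)` in `K` its infimum is the defect `D(f, f')`. The pairs
`(ι j z, z - ι j z)` belong to `A_F` and have defect `0`; since the graph of `A_F` is a subspace
on which `D ≤ 0`, this forces `u = ι j (u + A_F u)` on `D(A_F)`, and then the `h` that nearly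
minimise the functional also make `‖u - h‖²` small.

If `V` is unitary with `A V = c V A`, the functional at `(V u, c V A_F u)` and `V h` equals
`(1 - c) ‖u - h‖² + c` times the functional at `(u, A_F u)` and `h`, so it has infimum `0` as
well: `V` maps `A_F` to `c A_F`. For `V = U t` we have `c = p (g t)`, and `p t * p (g t)` acts as
the identity on the range of `A`, hence on that of `A* ⊇ A_F`.
-/

open scoped InnerProduct

noncomputable section

namespace LinearPMap

variable {𝕜 E F : Type*} [RCLike 𝕜] [NormedAddCommGroup E] [InnerProductSpace 𝕜 E]
  [NormedAddCommGroup F] [InnerProductSpace 𝕜 F] [CompleteSpace E] {T : E →ₗ.[𝕜] F}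

theorem exists_adjoint_apply_eq (hT : Dense (T.domain : Set E)) {y : F} {x₀ : E}
    (hx₀ : ∀ x : T.domain, ⟪x₀, (x : E)⟫_𝕜 = ⟪y, T x⟫_𝕜) :
    ∃ hy : y ∈ T.adjoint.domain, T.adjoint ⟨y, hy⟩ = x₀ :=
  have hy := mem_adjoint_domain_of_exists y ⟨x₀, hx₀⟩
  ⟨hy, adjoint_apply_eq hT ⟨y, hy⟩ hx₀⟩

theorem ofReal_smul_adjoint_apply (hT : Dense (T.domain : Set E)) {r : ℝ}
    (hr : ∀ x : T.domain, (r : 𝕜) • T x = T x) (y : T.adjoint.domain) :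
    (r : 𝕜) • T.adjoint y = T.adjoint y :=
  (adjoint_apply_eq hT y fun x ↦ by
    rw [inner_smul_left, RCLike.conj_ofReal, adjoint_isFormalAdjoint hT, ← inner_smul_right,
      hr]).symm

end LinearPMap

theorem LinearIsometryEquiv.eq_symm_of_inner_apply {𝕜 E : Type*} [RCLike 𝕜]
    [NormedAddCommGroup E] [InnerProductSpace 𝕜 E] {V W : E ≃ₗᵢ[𝕜] E}
    (h : ∀ x y : E, ⟪V x, y⟫_𝕜 = ⟪x, W y⟫_𝕜) : W = V.symm := by
  ext y
  refine ext_inner_left 𝕜 fun x ↦ ?_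
  rw [← h, ← V.inner_map_map x, V.apply_symm_apply]

variable {H : Type*} [NormedAddCommGroup H] [InnerProductSpace ℂ H]

structure IsNonnegSymm (A : H →ₗ.[ℂ] H) : Prop where
  isFormalAdjoint : A.IsFormalAdjoint A
  re_inner_apply_nonneg : ∀ x : A.domain, 0 ≤ (⟪(x : H), A x⟫_ℂ).re

namespace IsNonnegSymm

variable {A : H →ₗ.[ℂ] H} (hA : IsNonnegSymm A)
include hA

theorem re_inner_apply_left_nonneg (x : A.domain) : 0 ≤ (⟪A x, (x : H)⟫_ℂ).re := by
  simpa only [← inner_conj_symm (A x), Complex.conj_re] using hA.re_inner_apply_nonneg x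

end IsNonnegSymm

variable {A : H →ₗ.[ℂ] H}

/-- `D(A)` with the form inner product `⟪x, y⟫ + ⟪A x, y⟫`; the type depends on the proof of
nonnegativity so that this inner product can be an instance. -/
def FormDomain (_ : IsNonnegSymm A) : Type _ := A.domain

namespace FormDomain

variable (hA : IsNonnegSymm A)

instance : AddCommGroup (FormDomain hA) := inferInstanceAs (AddCommGroup A.domain)

instance : Module ℂ (FormDomain hA) := inferInstanceAs (Module ℂ A.domain)

def equivDomain : FormDomain hA ≃ₗ[ℂ] A.domain := LinearEquiv.refl ℂ A.domain

variable {hA}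

abbrev core : InnerProductSpace.Core ℂ (FormDomain hA) where
  inner x y :=
    ⟪(equivDomain hA x : H), equivDomain hA y⟫_ℂ + ⟪A (equivDomain hA x), equivDomain hA y⟫_ℂ
  conj_inner_symm x y := by
    rw [map_add, inner_conj_symm, inner_conj_symm, hA.isFormalAdjoint]
  re_inner_nonneg x := by
    rw [map_add, RCLike.re_to_complex, RCLike.re_to_complex]
    exact add_nonneg (inner_self_nonneg (𝕜 := ℂ)) (hA.re_inner_apply_left_nonneg _)
  add_left x y z := by
    simp only [map_add, Submodule.coe_add, LinearPMap.map_add, inner_add_left]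
    ring
  smul_left x y r := by
    simp only [map_smul, Submodule.coe_smul, LinearPMap.map_smul, inner_smul_left]
    ring
  definite x hx := by
    have hre := congrArg Complex.re hx
    rw [Complex.add_re, Complex.zero_re] at hre
    have h₀ : (equivDomain hA x : H) = 0 :=
      re_inner_self_nonpos (𝕜 := ℂ).mp (by
        rw [RCLike.re_to_complex]
        linarith [hA.re_inner_apply_left_nonneg (equivDomain hA x)])
    exact (equivDomain hA).map_eq_zero_iff.mp (Subtype.ext h₀)

instance : NormedAddCommGroup (FormDomain hA) := core.toNormedAddCommGroup

instance : InnerProductSpace ℂ (FormDomain hA) := .ofCore core.toCore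

theorem inner_def (x y : FormDomain hA) :
    ⟪x, y⟫_ℂ =
      ⟪(equivDomain hA x : H), equivDomain hA y⟫_ℂ + ⟪A (equivDomain hA x), equivDomain hA y⟫_ℂ :=
  rfl

theorem norm_sq_eq (x : FormDomain hA) :
    ‖x‖ ^ 2 =
      ‖(equivDomain hA x : H)‖ ^ 2 + (⟪A (equivDomain hA x), equivDomain hA x⟫_ℂ).re := by
  simp only [← inner_self_eq_norm_sq (𝕜 := ℂ), inner_def, map_add, RCLike.re_to_complex]

theorem norm_equivDomain_le (x : FormDomain hA) : ‖(equivDomain hA x : H)‖ ≤ ‖x‖ := by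
  rw [← sq_le_sq₀ (norm_nonneg _) (norm_nonneg _), norm_sq_eq]
  linarith [hA.re_inner_apply_left_nonneg (equivDomain hA x)]

variable (hA)

def incl : FormDomain hA →L[ℂ] H :=
  LinearMap.mkContinuous (A.domain.subtype ∘ₗ (equivDomain hA).toLinearMap) 1
    fun x ↦ (one_mul ‖x‖).symm ▸ norm_equivDomain_le x

end FormDomain

open UniformSpace (Completion)

abbrev FormCompletion (hA : IsNonnegSymm A) : Type _ := Completion (FormDomain hA)

namespace FormCompletion

variable (hA : IsNonnegSymm A)

def ofDomain : A.domain →ₗ[ℂ] FormCompletion hA :=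
  Completion.toComplL.toLinearMap ∘ₗ (FormDomain.equivDomain hA).symm.toLinearMap

variable {hA}

theorem denseRange_ofDomain : DenseRange (ofDomain hA) :=
  Completion.denseRange_coe.comp (FormDomain.equivDomain hA).symm.surjective.denseRange
    (Completion.continuous_coe _)

theorem exists_norm_ofDomain_sub_sq_lt (k : FormCompletion hA) {ε : ℝ}
    (hε : 0 < ε) : ∃ h : A.domain, ‖ofDomain hA h - k‖ ^ 2 < ε := by
  obtain ⟨h, hh⟩ := denseRange_ofDomain.exists_dist_lt k (Real.sqrt_pos.mpr hε)
  refine ⟨h, ?_⟩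
  rw [dist_comm, dist_eq_norm] at hh
  exact (Real.lt_sqrt (norm_nonneg _)).mp hh

theorem norm_ofDomain_sq (x : A.domain) :
    ‖ofDomain hA x‖ ^ 2 = ‖(x : H)‖ ^ 2 + (⟪A x, (x : H)⟫_ℂ).re := by
  rw [ofDomain, LinearMap.comp_apply, ContinuousLinearMap.coe_coe, Completion.coe_toComplL,
    Completion.norm_coe, FormDomain.norm_sq_eq]
  rfl

variable [CompleteSpace H]

variable (hA) in
def incl : FormCompletion hA →L[ℂ] H := (FormDomain.incl hA).extend Completion.toComplL

theorem incl_ofDomain (x : A.domain) : incl hA (ofDomain hA x) = x :=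
  (FormDomain.incl hA).extend_eq Completion.denseRange_coe
    (Completion.isUniformEmbedding_coe _).isUniformInducing _

theorem norm_incl_le (k : FormCompletion hA) : ‖incl hA k‖ ≤ ‖k‖ := by
  have hnorm : ‖incl hA‖ ≤ 1 := by
    refine (ContinuousLinearMap.opNorm_extend_le (N := 1) _ Completion.denseRange_coe
      fun x ↦ by simp).trans ?_
    rw [NNReal.coe_one, one_mul]
    exact ContinuousLinearMap.opNorm_le_bound _ zero_le_one fun x ↦
      (one_mul ‖x‖).symm ▸ FormDomain.norm_equivDomain_le (hA := hA) x
  simpa using (incl hA).le_of_opNorm_le hnorm k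

theorem inner_adjoint_incl_ofDomain (z : H) (x : A.domain) :
    ⟪((incl hA)†) z, ofDomain hA x⟫_ℂ = ⟪z, (x : H)⟫_ℂ := by
  rw [ContinuousLinearMap.adjoint_inner_left, incl_ofDomain]

theorem inner_incl_add_apply (k : FormCompletion hA) (x : A.domain) :
    ⟪incl hA k, (x : H) + A x⟫_ℂ = ⟪k, ofDomain hA x⟫_ℂ := by
  induction k using Completion.induction_on with
  | hp => exact isClosed_eq (by fun_prop) (by fun_prop)
  | ih y =>
    have hy : incl hA y = FormDomain.equivDomain hA y :=
      (FormDomain.incl hA).extend_eq Completion.denseRange_coe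
        (Completion.isUniformEmbedding_coe _).isUniformInducing y
    rw [hy, ofDomain, LinearMap.comp_apply, ContinuousLinearMap.coe_coe, Completion.coe_toComplL,
      Completion.inner_coe, FormDomain.inner_def, LinearEquiv.coe_coe, LinearEquiv.apply_symm_apply,
      inner_add_right, hA.isFormalAdjoint]

end FormCompletion

def friedrichsGap (A : H →ₗ.[ℂ] H) (f f' : H) (h : A.domain) : ℝ :=
  ‖f - h‖ ^ 2 + (⟪f' - A h, f - h⟫_ℂ).re

theorem friedrichsGap_map (V : H ≃ₗᵢ[ℂ] H) {c : ℝ}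
    (hcomm : ∀ (x : H) (hx : x ∈ A.domain) (hVx : V x ∈ A.domain),
      A ⟨V x, hVx⟩ = (c : ℂ) • V (A ⟨x, hx⟩))
    (f f' : H) (h : A.domain) (hVh : V h ∈ A.domain) :
    friedrichsGap A (V f) ((c : ℂ) • V f') ⟨V h, hVh⟩ =
      (1 - c) * ‖f - h‖ ^ 2 + c * friedrichsGap A f f' h := by
  rw [friedrichsGap, friedrichsGap, hcomm h h.2, ← smul_sub, ← map_sub, ← map_sub,
    V.norm_map, inner_smul_left, V.inner_map_map, Complex.conj_ofReal, Complex.re_ofReal_mul]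
  ring

section Friedrichs

variable [CompleteSpace H]

def IsFriedrichsExtension (A AF : H →ₗ.[ℂ] H) : Prop :=
  ∀ f f' : H, (∃ hf : f ∈ AF.domain, AF ⟨f, hf⟩ = f') ↔
    ((∃ hf : f ∈ A.adjoint.domain, A.adjoint ⟨f, hf⟩ = f') ∧
      ∀ ε : ℝ, 0 < ε → ∃ h : A.domain, friedrichsGap A f f' h < ε)

open FormCompletion

/-- For `(f, f') ∈ A*` this is the infimum of `friedrichsGap A f f'`, by `friedrichsGap_eq`. -/
def friedrichsDefect (hA : IsNonnegSymm A) (f f' : H) : ℝ :=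
  (⟪f + f', f⟫_ℂ).re - ‖((incl hA)†) (f + f')‖ ^ 2

theorem friedrichsGap_eq (hA : IsNonnegSymm A) {f f' : H}
    (hf : ∀ h : A.domain, ⟪f', (h : H)⟫_ℂ = ⟪f, A h⟫_ℂ) (h : A.domain) :
    friedrichsGap A f f' h =
      friedrichsDefect hA f f' + ‖ofDomain hA h - ((incl hA)†) (f + f')‖ ^ 2 := by
  have hre : (⟪ofDomain hA h, ((incl hA)†) (f + f')⟫_ℂ).re = (⟪f + f', (h : H)⟫_ℂ).re := by
    rw [← inner_conj_symm, Complex.conj_re, inner_adjoint_incl_ofDomain]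
  have hAh : (⟪A h, f⟫_ℂ).re = (⟪f', (h : H)⟫_ℂ).re := by
    rw [← inner_conj_symm, Complex.conj_re, hf]
  have hf2 : (⟪f, f⟫_ℂ).re = ‖f‖ ^ 2 := inner_self_eq_norm_sq (𝕜 := ℂ) f
  rw [friedrichsGap, friedrichsDefect, norm_sub_sq (𝕜 := ℂ), norm_sub_sq (𝕜 := ℂ),
    norm_ofDomain_sq]
  simp only [RCLike.re_to_complex, inner_sub_left, inner_sub_right, inner_add_left,
    Complex.sub_re, Complex.add_re] at hre ⊢
  linarith

theorem friedrichsDefect_incl_adjoint (hA : IsNonnegSymm A) (z : H) :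
    friedrichsDefect hA (incl hA (((incl hA)†) z)) (z - incl hA (((incl hA)†) z)) = 0 := by
  rw [friedrichsDefect, add_sub_cancel, ← ContinuousLinearMap.adjoint_inner_left,
    ← RCLike.re_to_complex, inner_self_eq_norm_sq, sub_self]

theorem friedrichsDefect_add_incl_adjoint (hA : IsNonnegSymm A) (w : H) :
    friedrichsDefect hA (w + incl hA (((incl hA)†) w)) (-incl hA (((incl hA)†) w)) = ‖w‖ ^ 2 := by
  rw [friedrichsDefect, add_neg_cancel_right, inner_add_right, Complex.add_re,
    ← ContinuousLinearMap.adjoint_inner_left, ← RCLike.re_to_complex, ← RCLike.re_to_complex,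
    inner_self_eq_norm_sq, inner_self_eq_norm_sq, add_sub_cancel_right]

namespace IsFriedrichsExtension

variable {AF : H →ₗ.[ℂ] H} (hAF : IsFriedrichsExtension A AF)
include hAF

theorem inner_apply (hdense : Dense (A.domain : Set H)) (a : AF.domain) (h : A.domain) :
    ⟪AF a, (h : H)⟫_ℂ = ⟪(a : H), A h⟫_ℂ := by
  obtain ⟨⟨hf, hval⟩, -⟩ := (hAF a (AF a)).mp ⟨a.2, rfl⟩
  rw [← hval]
  exact LinearPMap.adjoint_isFormalAdjoint hdense ⟨a, hf⟩ h

theorem ofReal_smul_apply (hdense : Dense (A.domain : Set H)) {r : ℝ}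
    (hr : ∀ h : A.domain, (r : ℂ) • A h = A h) (a : AF.domain) : (r : ℂ) • AF a = AF a := by
  obtain ⟨⟨hf, hval⟩, -⟩ := (hAF a (AF a)).mp ⟨a.2, rfl⟩
  rw [← hval]
  exact LinearPMap.ofReal_smul_adjoint_apply hdense hr _

variable (hA : IsNonnegSymm A)

theorem friedrichsDefect_nonpos (hdense : Dense (A.domain : Set H)) (a : AF.domain) :
    friedrichsDefect hA a (AF a) ≤ 0 := by
  by_contra! hpos
  obtain ⟨h, hh⟩ := ((hAF a (AF a)).mp ⟨a.2, rfl⟩).2 _ hpos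
  rw [friedrichsGap_eq hA (hAF.inner_apply hdense a)] at hh
  linarith [sq_nonneg ‖ofDomain hA h - ((incl hA)†) (a + AF a)‖]

theorem exists_incl_adjoint_mem (hdense : Dense (A.domain : Set H)) (z : H) :
    ∃ hz : incl hA (((incl hA)†) z) ∈ AF.domain,
      AF ⟨incl hA (((incl hA)†) z), hz⟩ = z - incl hA (((incl hA)†) z) := by
  have hpair : ∀ h : A.domain,
      ⟪z - incl hA (((incl hA)†) z), (h : H)⟫_ℂ = ⟪incl hA (((incl hA)†) z), A h⟫_ℂ := by
    intro h
    have := inner_incl_add_apply (((incl hA)†) z) h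
    rw [inner_adjoint_incl_ofDomain, inner_add_right] at this
    rw [inner_sub_left, ← this, add_sub_cancel_left]
  refine (hAF _ _).mpr ⟨LinearPMap.exists_adjoint_apply_eq hdense hpair, fun ε hε ↦ ?_⟩
  obtain ⟨h, hh⟩ := exists_norm_ofDomain_sub_sq_lt (((incl hA)†) z) hε
  refine ⟨h, ?_⟩
  rwa [friedrichsGap_eq hA hpair, friedrichsDefect_incl_adjoint, zero_add, add_sub_cancel]

theorem eq_incl_adjoint (hdense : Dense (A.domain : Set H)) (a : AF.domain) :
    (a : H) = incl hA (((incl hA)†) (a + AF a)) := by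
  set x := (a : H) + AF a
  set w := (a : H) - incl hA (((incl hA)†) x)
  obtain ⟨hx, hAFx⟩ := hAF.exists_incl_adjoint_mem hA hdense x
  obtain ⟨hw, hAFw⟩ := hAF.exists_incl_adjoint_mem hA hdense w
  set b : AF.domain := a - ⟨_, hx⟩ + ⟨_, hw⟩
  have hb : (b : H) = w + incl hA (((incl hA)†) w) := rfl
  have hAFb : AF b = -incl hA (((incl hA)†) w) := by
    rw [LinearPMap.map_add, LinearPMap.map_sub, hAFx, hAFw]
    simp only [x, w]
    abel
  have hw0 : ‖w‖ ^ 2 ≤ 0 := by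
    simpa only [hb, hAFb, friedrichsDefect_add_incl_adjoint] using
      hAF.friedrichsDefect_nonpos hA hdense b
  exact sub_eq_zero.mp (by simpa using hw0)

include hA in
theorem exists_friedrichsGap_lt (hdense : Dense (A.domain : Set H)) (a : AF.domain) {δ : ℝ}
    (hδ : 0 < δ) : ∃ h : A.domain,
      ‖(a : H) - h‖ ^ 2 ≤ friedrichsGap A a (AF a) h ∧ friedrichsGap A a (AF a) h < δ := by
  have ha := hAF.eq_incl_adjoint hA hdense a
  obtain ⟨h, hh⟩ := exists_norm_ofDomain_sub_sq_lt (((incl hA)†) (a + AF a)) hδ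
  have hgap : friedrichsGap A a (AF a) h = ‖ofDomain hA h - ((incl hA)†) (a + AF a)‖ ^ 2 := by
    have hdefect := friedrichsDefect_incl_adjoint hA (a + AF a)
    rw [← ha, add_sub_cancel_left] at hdefect
    rw [friedrichsGap_eq hA (hAF.inner_apply hdense a), hdefect, zero_add]
  refine ⟨h, ?_, hgap ▸ hh⟩
  rw [hgap, ← incl_ofDomain (hA := hA) h]
  nth_rw 1 [ha]
  rw [← map_sub, norm_sub_rev]
  gcongr
  exact norm_incl_le _

include hA in
theorem exists_apply_map_eq_smul (hdense : Dense (A.domain : Set H)) (V : H ≃ₗᵢ[ℂ] H) (c : ℝ)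
    (hdom : ∀ x : H, x ∈ A.domain ↔ V x ∈ A.domain)
    (hcomm : ∀ (x : H) (hx : x ∈ A.domain) (hVx : V x ∈ A.domain),
      A ⟨V x, hVx⟩ = (c : ℂ) • V (A ⟨x, hx⟩))
    (a : AF.domain) : ∃ hVa : V a ∈ AF.domain, AF ⟨V a, hVa⟩ = (c : ℂ) • V (AF a) := by
  have hpair : ∀ h : A.domain, ⟪(c : ℂ) • V (AF a), (h : H)⟫_ℂ = ⟪V a, A h⟫_ℂ := by
    intro h
    have hh : V.symm h ∈ A.domain := (hdom _).mpr (by simp)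
    have hAh : A h = (c : ℂ) • V (A ⟨V.symm h, hh⟩) := by
      rw [← hcomm _ hh (by simp)]
      congr
      simp
    calc ⟪(c : ℂ) • V (AF a), (h : H)⟫_ℂ
        = (c : ℂ) * ⟪AF a, V.symm h⟫_ℂ := by
          rw [inner_smul_left, Complex.conj_ofReal, ← V.inner_map_map (AF a),
            V.apply_symm_apply]
      _ = (c : ℂ) * ⟪(a : H), A ⟨V.symm h, hh⟩⟫_ℂ := by rw [← hAF.inner_apply hdense a ⟨_, hh⟩]
      _ = ⟪V a, A h⟫_ℂ := by rw [hAh, inner_smul_right, V.inner_map_map]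
  refine (hAF _ _).mpr ⟨LinearPMap.exists_adjoint_apply_eq hdense hpair, fun ε hε ↦ ?_⟩
  obtain ⟨h, hN, hgap⟩ := hAF.exists_friedrichsGap_lt hA hdense a
    (div_pos hε (by positivity : (0 : ℝ) < 1 + |c|))
  refine ⟨⟨V h, (hdom h).mp h.2⟩, ?_⟩
  rw [friedrichsGap_map V hcomm]
  rw [lt_div_iff₀ (by positivity)] at hgap
  -- `(1 - c) N + c G ≤ (1 + |c|) G` whenever `0 ≤ N ≤ G`
  have hN₀ := sq_nonneg ‖(a : H) - h‖
  rcases le_total c 1 with hc | hc <;> nlinarith [le_abs_self c, abs_nonneg c]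

end IsFriedrichsExtension

end Friedrichs

namespace IsPtHomogeneous

variable {T : Type*} {U : T → H ≃ₗᵢ[ℂ] H} {g : T → T} {p : T → ℝ}
  (hhom : IsPtHomogeneous U p A) (hg : ∀ t, U (g t) = (U t).symm)
include hhom hg

theorem apply_map_eq_smul (t : T) (x : H) (hx : x ∈ A.domain) (hUx : U t x ∈ A.domain) :
    A ⟨U t x, hUx⟩ = (p (g t) : ℂ) • U t (A ⟨x, hx⟩) := by
  have hinv := (hhom (g t)).2 (U t x) hUx (by simpa [hg] using hx)
  simp only [hg, LinearIsometryEquiv.symm_apply_apply] at hinv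
  rw [← map_smul, ← hinv, LinearIsometryEquiv.apply_symm_apply]

theorem mul_smul_apply (t : T) (h : A.domain) : ((p t * p (g t) : ℝ) : ℂ) • A h = A h := by
  have hUh : U t h ∈ A.domain := ((hhom t).1 h).mp h.2
  apply (U t).injective
  conv_rhs => rw [(hhom t).2 h h.2 hUh, hhom.apply_map_eq_smul hg t h h.2 hUh]
  rw [map_smul, smul_smul, Complex.ofReal_mul]

end IsPtHomogeneous

end

/-- the Friedrichs extension `AF` of a densely defined nonnegative
symmetric `p(t)`-homogeneous operator `A` is `p(t)`-homogeneous.  `AF` is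
characterized by: `{f, f'} ∈ AF` iff `{f, f'} ∈ A*` and
`inf { ‖f − h‖² + re (f' − Ah, f − h) : h ∈ D(A) } = 0`. -/
theorem friedrichs_extension_pt_homogeneous
    {H : Type*} [NormedAddCommGroup H] [InnerProductSpace ℂ H] [CompleteSpace H]
    {T : Type*} (U : T → (H ≃ₗᵢ[ℂ] H)) (g : T → T) (p : T → ℝ)
    (hadj : ∀ (t : T) (x y : H), (inner ℂ (U t x) y : ℂ) = inner ℂ x (U (g t) y))
    (A : H →ₗ.[ℂ] H) (hdense : Dense (A.domain : Set H))
    (hsym : ∀ x y : A.domain, (inner ℂ (A x) (y : H) : ℂ) = inner ℂ (x : H) (A y))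
    (hnonneg : ∀ x : A.domain, 0 ≤ (inner ℂ (x : H) (A x) : ℂ).re)
    (hhom : IsPtHomogeneous U p A)
    (AF : H →ₗ.[ℂ] H)
    (hAF : ∀ (f f' : H),
      (∃ hf : f ∈ AF.domain, AF ⟨f, hf⟩ = f') ↔
        ((∃ hf : f ∈ A.adjoint.domain, A.adjoint ⟨f, hf⟩ = f') ∧
          ∀ ε : ℝ, 0 < ε → ∃ h : A.domain,
            ‖f - (h : H)‖ ^ 2 + (inner ℂ (f' - A h) (f - (h : H)) : ℂ).re < ε)) :
    IsPtHomogeneous U p AF := by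
  have hg : ∀ t, U (g t) = (U t).symm := fun t ↦
    LinearIsometryEquiv.eq_symm_of_inner_apply (hadj t)
  have hF : IsFriedrichsExtension A AF := hAF
  have hmap : ∀ (t : T) (a : AF.domain),
      ∃ hUa : U t a ∈ AF.domain, AF ⟨U t a, hUa⟩ = (p (g t) : ℂ) • U t (AF a) := fun t ↦
    hF.exists_apply_map_eq_smul ⟨hsym, hnonneg⟩ hdense (U t) (p (g t)) (hhom t).1
      (hhom.apply_map_eq_smul hg t)
  refine fun t ↦ ⟨fun x ↦ ⟨fun hx ↦ (hmap t ⟨x, hx⟩).1, fun hUx ↦ ?_⟩, fun x hx hUx ↦ ?_⟩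
  · simpa [hg] using (hmap (g t) ⟨U t x, hUx⟩).1
  · obtain ⟨_, hval⟩ := hmap t ⟨x, hx⟩
    rw [hval, smul_smul, ← Complex.ofReal_mul, ← map_smul,
      hF.ofReal_smul_apply hdense (hhom.mul_smul_apply hg t)]
end

section
/- Let A₀ be a nonnegative self-adjoint operator that is p(t)-homogeneous with respect to a family of unitary operators {U_t}, and set G_t = (p(t)A₀ + I)(A₀ + I)⁻¹. Then G_t U_t = U_t G_{g(t)}⁻¹ = (G_{g(t)} U_{g(t)})⁻¹ for all t ∈ 𝔗. -/
open InnerProductSpace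

/-!
Write `z = (A₀ + I) y`. Then `G_{g(t)} z = (p(g(t)) A₀ + I) y`, and homogeneity moves `U_t` through
`A₀` at the cost of a factor `p(t)`, giving `U_t G_{g(t)} z = (p(g(t)) p(t) A₀ + I) U_t y`. Since
`U_{g(t)} = U_t⁻¹`, applying homogeneity twice shows `p(g(t)) p(t) A₀ = A₀`, so this is
`(A₀ + I) U_t y`, which `G_t` sends to `(p(t) A₀ + I) U_t y = U_t z`. The other two identities are
the same computation, with `x` replaced by `U_{g(t)} x` or with the roles of `t` and `g(t)` swapped.
-/

theorem LinearIsometryEquiv.apply_eq_symm_apply_of_inner_map_eq {𝕜 E : Type*} [RCLike 𝕜]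
    [NormedAddCommGroup E] [InnerProductSpace 𝕜 E] (U : E ≃ₗᵢ[𝕜] E) {V : E → E}
    (hV : ∀ x y, (inner 𝕜 (U x) y : 𝕜) = inner 𝕜 x (V y)) (y : E) : V y = U.symm y :=
  ext_inner_left 𝕜 fun x => by rw [← hV, U.inner_map_eq_flip]

namespace IsPtHomogeneous

variable {H : Type*} [NormedAddCommGroup H] [InnerProductSpace ℂ H] {T : Type*}
  {U : T → (H ≃ₗᵢ[ℂ] H)} {p : T → ℝ} {A : H →ₗ.[ℂ] H}

theorem map_mem_domain (h : IsPtHomogeneous U p A) (t : T) {x : H} (hx : x ∈ A.domain) :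
    U t x ∈ A.domain :=
  ((h t).1 x).mp hx

theorem map_apply (h : IsPtHomogeneous U p A) (t : T) (y : A.domain) :
    U t (A y) = (p t : ℂ) • A ⟨U t y, h.map_mem_domain t y.2⟩ :=
  (h t).2 y y.2 _

theorem smul_apply_of_leftInverse (h : IsPtHomogeneous U p A) {r s : T}
    (hrs : ∀ x, U r (U s x) = x) (y : A.domain) :
    ((p r : ℂ) * p s) • A y = A y := by
  have hy : (⟨U r (U s y), h.map_mem_domain r (h.map_mem_domain s y.2)⟩ : A.domain) = y :=
    Subtype.ext (hrs y)
  calc ((p r : ℂ) * p s) • A y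
      = (p s : ℂ) • (p r : ℂ) • A ⟨U r (U s y), _⟩ := by rw [hy, smul_smul, mul_comm]
    _ = U r (U s (A y)) := by rw [h.map_apply s, map_smul, h.map_apply r]
    _ = A y := hrs _

theorem apply_map_apply_eq_map (h : IsPtHomogeneous U p A) {r s : T}
    (hrs : ∀ x, U r (U s x) = x) {Gr Gs : H → H}
    (hGr : ∀ y : A.domain, Gr (A y + y) = (p r : ℂ) • A y + y)
    (hGs : ∀ y : A.domain, Gs (A y + y) = (p s : ℂ) • A y + y)
    (hsurj : ∀ z : H, ∃ y : A.domain, A y + y = z) (z : H) :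
    Gs (U s (Gr z)) = U s z := by
  obtain ⟨y, rfl⟩ := hsurj z
  set w : A.domain := ⟨U s y, h.map_mem_domain s y.2⟩
  have hw : U s (Gr (A y + y)) = A w + w := by
    rw [hGr, map_add, map_smul, h.map_apply s, smul_smul, h.smul_apply_of_leftInverse hrs w]
  rw [hw, hGs, ← h.map_apply s, ← map_add]

end IsPtHomogeneous

theorem Gt_Ut_inverse_relations_general
    {H : Type*} [NormedAddCommGroup H] [InnerProductSpace ℂ H]
    {T : Type*} (U : T → (H ≃ₗᵢ[ℂ] H)) (g : T → T) (p : T → ℝ)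
    (hadj : ∀ (t : T) (x y : H), (inner ℂ (U t x) y : ℂ) = inner ℂ x (U (g t) y))
    (A₀ : H →ₗ.[ℂ] H)
    (hhom : IsPtHomogeneous U p A₀)
    (G : T → (H →L[ℂ] H))
    (hG : ∀ (t : T) (x : A₀.domain), G t (A₀ x + (x : H)) = (p t : ℂ) • A₀ x + (x : H))
    (hsurj : ∀ y : H, ∃ x : A₀.domain, A₀ x + (x : H) = y) :
    ∀ (t : T) (x : H),
      G t (U t (G (g t) x)) = U t x ∧
      G t (U t (G (g t) (U (g t) x))) = x ∧
      G (g t) (U (g t) (G t (U t x))) = x := by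
  intro t x
  have hU_symm (x : H) : U (g t) x = (U t).symm x :=
    (U t).apply_eq_symm_apply_of_inner_map_eq (hadj t) x
  have hUgU (x : H) : U (g t) (U t x) = x := by rw [hU_symm, LinearIsometryEquiv.symm_apply_apply]
  have hUUg (x : H) : U t (U (g t) x) = x := by rw [hU_symm, LinearIsometryEquiv.apply_symm_apply]
  have hGUG (x : H) : G t (U t (G (g t) x)) = U t x :=
    hhom.apply_map_apply_eq_map hUgU (hG (g t)) (hG t) hsurj x
  refine ⟨hGUG x, by rw [hGUG, hUUg], ?_⟩
  rw [hhom.apply_map_apply_eq_map hUUg (hG t) (hG (g t)) hsurj, hUgU]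

/-- for a nonnegative self-adjoint `p(t)`-homogeneous operator
`A₀` and `G_t = (p(t)A₀ + I)(A₀ + I)⁻¹`, one has
`G_t U_t = U_t G_{g(t)}⁻¹ = (G_{g(t)} U_{g(t)})⁻¹`.  The operator `G t` is
specified by `G t ((A₀ + 1) x) = (p t • A₀ + 1) x` on the (full) range of
`A₀ + I`. -/
theorem Gt_Ut_inverse_relations
    {H : Type*} [NormedAddCommGroup H] [InnerProductSpace ℂ H] [CompleteSpace H]
    {T : Type*} (U : T → (H ≃ₗᵢ[ℂ] H)) (g : T → T) (p : T → ℝ)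
    (hadj : ∀ (t : T) (x y : H), (inner ℂ (U t x) y : ℂ) = inner ℂ x (U (g t) y))
    (hp : ∀ t, 0 < p t)
    (A₀ : H →ₗ.[ℂ] H) (hdense : Dense (A₀.domain : Set H))
    (hsa : A₀.adjoint = A₀)
    (hnonneg : ∀ x : A₀.domain, 0 ≤ (inner ℂ (x : H) (A₀ x) : ℂ).re)
    (hhom : IsPtHomogeneous U p A₀)
    (G : T → (H →L[ℂ] H))
    (hG : ∀ (t : T) (x : A₀.domain), G t (A₀ x + (x : H)) = (p t : ℂ) • A₀ x + (x : H))
    (hsurj : ∀ y : H, ∃ x : A₀.domain, A₀ x + (x : H) = y) :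
    ∀ (t : T) (x : H),
      G t (U t (G (g t) x)) = U t x ∧
      G t (U t (G (g t) (U (g t) x))) = x ∧
      G (g t) (U (g t) (G t (U t x))) = x :=
  Gt_Ut_inverse_relations_general U g p hadj A₀ hhom G hG hsurj
end

section
/- Under the hypotheses of the previous item (G_t U_t h = ξ(t)h, h ≠ 0): if p(t) = 1 then |ξ(t)| = 1, and if p(t) ≠ 1 then min{1, p(t)} < |ξ(t)| < max{1, p(t)}. -/
/-!
Write `U_t h = A₀ x + x` and put `a = A₀ x`, `b = x`; both are nonzero because `h ∉ D(A₀)`, and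
`Re ⟪a, b⟫ ≥ 0` by nonnegativity of `A₀`. Then `‖h‖ = ‖a + b‖`, `|ξ(t)| ‖h‖ = ‖p a + b‖` and
`p ‖h‖ = ‖p a + p b‖`. Since `‖c a + d b‖² = c² ‖a‖² + 2 c d Re ⟪a, b⟫ + d² ‖b‖²`, the norm
`‖c a + d b‖` is strictly increasing in each of `c, d ≥ 0`, which orders these three numbers.
-/

open InnerProductSpace

section NormSmulAddSmul

variable {𝕜 E : Type*} [RCLike 𝕜] [NormedAddCommGroup E] [InnerProductSpace 𝕜 E]

theorem norm_smul_add_smul_sq (a b : E) (c d : ℝ) :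
    ‖(c : 𝕜) • a + (d : 𝕜) • b‖ ^ 2 =
      c ^ 2 * ‖a‖ ^ 2 + 2 * (c * d) * RCLike.re (inner 𝕜 a b) + d ^ 2 * ‖b‖ ^ 2 := by
  rw [@norm_add_sq 𝕜, inner_smul_left, inner_smul_right, RCLike.conj_ofReal, ← mul_assoc,
    ← RCLike.ofReal_mul, RCLike.re_ofReal_mul, norm_smul, norm_smul, RCLike.norm_ofReal,
    RCLike.norm_ofReal, mul_pow, mul_pow, sq_abs, sq_abs]
  ring

variable {a b : E}

theorem norm_smul_add_smul_lt_of_lt_left (hab : 0 ≤ RCLike.re (inner 𝕜 a b)) (ha : a ≠ 0)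
    {c c' d : ℝ} (hc : 0 ≤ c) (hcc' : c < c') (hd : 0 ≤ d) :
    ‖(c : 𝕜) • a + (d : 𝕜) • b‖ < ‖(c' : 𝕜) • a + (d : 𝕜) • b‖ := by
  refine lt_of_pow_lt_pow_left₀ 2 (norm_nonneg _) ?_
  rw [norm_smul_add_smul_sq, norm_smul_add_smul_sq]
  have hsq : c ^ 2 * ‖a‖ ^ 2 < c' ^ 2 * ‖a‖ ^ 2 := by gcongr
  have hcross : c * d * RCLike.re (inner 𝕜 a b) ≤ c' * d * RCLike.re (inner 𝕜 a b) := by gcongr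
  linarith

theorem norm_smul_add_smul_lt_of_lt_right (hab : 0 ≤ RCLike.re (inner 𝕜 a b)) (hb : b ≠ 0)
    {c d d' : ℝ} (hc : 0 ≤ c) (hd : 0 ≤ d) (hdd' : d < d') :
    ‖(c : 𝕜) • a + (d : 𝕜) • b‖ < ‖(c : 𝕜) • a + (d' : 𝕜) • b‖ := by
  rw [add_comm, add_comm ((c : 𝕜) • a)]
  exact norm_smul_add_smul_lt_of_lt_left (by rwa [inner_re_symm]) hb hd hdd' hc

theorem min_one_mul_norm_add_lt_norm_smul_add (hab : 0 ≤ RCLike.re (inner 𝕜 a b))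
    (ha : a ≠ 0) (hb : b ≠ 0) {p : ℝ} (hp : 0 < p) (hp1 : p ≠ 1) :
    min 1 p * ‖a + b‖ < ‖(p : 𝕜) • a + b‖ ∧ ‖(p : 𝕜) • a + b‖ < max 1 p * ‖a + b‖ := by
  have hsum : ‖a + b‖ = ‖((1 : ℝ) : 𝕜) • a + ((1 : ℝ) : 𝕜) • b‖ := by simp
  have hscaled : p * ‖a + b‖ = ‖(p : 𝕜) • a + (p : 𝕜) • b‖ := by
    rw [← smul_add, norm_smul, RCLike.norm_ofReal, abs_of_pos hp]
  have hmixed : ‖(p : 𝕜) • a + b‖ = ‖(p : 𝕜) • a + ((1 : ℝ) : 𝕜) • b‖ := by simp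
  rw [hmixed]
  rcases hp1.lt_or_gt with hlt | hgt
  · rw [min_eq_right hlt.le, max_eq_left hlt.le, hscaled, one_mul, hsum]
    exact ⟨norm_smul_add_smul_lt_of_lt_right hab hb hp.le hp.le hlt,
      norm_smul_add_smul_lt_of_lt_left hab ha hp.le hlt zero_le_one⟩
  · rw [min_eq_left hgt.le, max_eq_right hgt.le, hscaled, one_mul, hsum]
    exact ⟨norm_smul_add_smul_lt_of_lt_left hab ha zero_le_one hgt zero_le_one,
      norm_smul_add_smul_lt_of_lt_right hab hb hp.le zero_le_one hgt⟩

end NormSmulAddSmul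

theorem LinearPMap.apply_ne_zero_and_ne_zero_of_apply_add_notMem_domain {R E : Type*} [Ring R]
    [AddCommGroup E] [Module R E] (A : E →ₗ.[R] E) (x : A.domain) (hx : A x + x ∉ A.domain) :
    A x ≠ 0 ∧ (x : E) ≠ 0 := by
  constructor
  · intro hAx
    exact hx (by simp [hAx])
  · intro hx0
    have : x = 0 := Subtype.ext hx0
    exact hx (by simp [this])

theorem xi_invariance_modulus_bounds_general
    {H : Type*} [NormedAddCommGroup H] [InnerProductSpace ℂ H]
    {T : Type*} (U : T → (H ≃ₗᵢ[ℂ] H)) (p : T → ℝ)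
    (hp : ∀ t, 0 < p t)
    (A₀ : H →ₗ.[ℂ] H)
    (hnonneg : ∀ x : A₀.domain, 0 ≤ (inner ℂ (x : H) (A₀ x) : ℂ).re)
    (hhom : IsPtHomogeneous U p A₀)
    (G : T → (H →L[ℂ] H))
    (hG : ∀ (t : T) (x : A₀.domain), G t (A₀ x + (x : H)) = (p t : ℂ) • A₀ x + (x : H))
    (hsurj : ∀ y : H, ∃ x : A₀.domain, A₀ x + (x : H) = y)
    (h : H) (hnd : h ∉ A₀.domain) (ξ : T → ℝ)
    (hinv : ∀ t : T, G t (U t h) = (ξ t : ℂ) • h) :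
    ∀ t : T,
      (p t = 1 → |ξ t| = 1) ∧
      (p t ≠ 1 → min 1 (p t) < |ξ t| ∧ |ξ t| < max 1 (p t)) := by
  intro t
  obtain ⟨x, hx⟩ := hsurj (U t h)
  have hUh : U t h ∉ A₀.domain := fun hmem => hnd (((hhom t).1 h).mpr hmem)
  obtain ⟨hAx, hx0⟩ := A₀.apply_ne_zero_and_ne_zero_of_apply_add_notMem_domain x (hx ▸ hUh)
  have hre : 0 ≤ RCLike.re (inner ℂ (A₀ x) (x : H)) := by rw [inner_re_symm]; exact hnonneg x
  have hh : 0 < ‖h‖ := norm_pos_iff.mpr fun h0 => hnd (h0 ▸ A₀.domain.zero_mem)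
  have hnorm : ‖h‖ = ‖A₀ x + x‖ := by rw [hx, LinearIsometryEquiv.norm_map]
  have hξ : |ξ t| * ‖h‖ = ‖(p t : ℂ) • A₀ x + x‖ := by
    rw [← hG t x, hx, hinv t, norm_smul, Complex.norm_real, Real.norm_eq_abs]
  refine ⟨fun hp1 => ?_, fun hp1 => ?_⟩
  · rw [hp1, Complex.ofReal_one, one_smul, ← hnorm] at hξ
    exact (mul_eq_right₀ hh.ne').mp hξ
  · obtain ⟨hlow, hup⟩ := min_one_mul_norm_add_lt_norm_smul_add hre hAx hx0 (hp t) hp1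
    rw [← hnorm] at hlow hup
    exact ⟨lt_of_mul_lt_mul_right (hlow.trans_eq hξ.symm) hh.le,
      lt_of_mul_lt_mul_right (hξ.trans_lt hup) hh.le⟩

/-- if `G_t U_t h = ξ(t) h` with `h ≠ 0` and `h ∉ D(A₀)`, then
`|ξ(t)| = 1` when `p(t) = 1`, and `min{1,p(t)} < |ξ(t)| < max{1,p(t)}` when
`p(t) ≠ 1`. -/
theorem xi_invariance_modulus_bounds
    {H : Type*} [NormedAddCommGroup H] [InnerProductSpace ℂ H] [CompleteSpace H]
    {T : Type*} (U : T → (H ≃ₗᵢ[ℂ] H)) (g : T → T) (p : T → ℝ)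
    (hadj : ∀ (t : T) (x y : H), (inner ℂ (U t x) y : ℂ) = inner ℂ x (U (g t) y))
    (hp : ∀ t, 0 < p t)
    (A₀ : H →ₗ.[ℂ] H) (hdense : Dense (A₀.domain : Set H))
    (hsa : A₀.adjoint = A₀)
    (hnonneg : ∀ x : A₀.domain, 0 ≤ (inner ℂ (x : H) (A₀ x) : ℂ).re)
    (hhom : IsPtHomogeneous U p A₀)
    (G : T → (H →L[ℂ] H))
    (hG : ∀ (t : T) (x : A₀.domain), G t (A₀ x + (x : H)) = (p t : ℂ) • A₀ x + (x : H))
    (hsurj : ∀ y : H, ∃ x : A₀.domain, A₀ x + (x : H) = y)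
    (h : H) (hne : h ≠ 0) (hnd : h ∉ A₀.domain) (ξ : T → ℝ)
    (hinv : ∀ t : T, G t (U t h) = (ξ t : ℂ) • h) :
    ∀ t : T,
      (p t = 1 → |ξ t| = 1) ∧
      (p t ≠ 1 → min 1 (p t) < |ξ t| ∧ |ξ t| < max 1 (p t)) :=
  xi_invariance_modulus_bounds_general U p hp A₀ hnonneg hhom G hG hsurj h hnd ξ hinv
end
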